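/- arXiv:math/0301298 — 2 statements merged into one kernel-verified Lean document; each statement's English description precedes it below -/
import Mathlib

section
/- The norm of the Schur multiplier S_A on M₂(ℂ), where A has entries a₁₁ = a₁₂ = a₂₂ = 1, a₂₁ = 0, equals sup over θ ∈ ℝ of the operator norm of the matrix [[cos θ, sin θ],[0, cos θ]]. -/
/-!
Both sides equal `2 / √3 = √(4/3)`. If `‖X‖ ≤ 1`, the first row and the second column of `X`
have Euclidean length at most `1`, and every upper triangular `!![a, b; 0, d]` with
`|a|² + |b|² ≤ 1` and `|b|² + |d|² ≤ 1` has norm at most `√(4/3)`; this bounds the left-hand side.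
Conversely the rotation matrices are unitary, their Schur product with `!![1, 1; 0, 1]` is the
matrix on the right, and for `sin² θ = 1/3` that matrix has norm `√(4/3)`.
-/

open scoped Matrix.Norms.L2Operator

open Matrix Real

/-- `4/3 - MᵀM` is positive semidefinite for `M = !![α, β; 0, δ]`: its top-left entry is
positive and its determinant `hdet` is nonnegative. -/
lemma triangular_quadForm_le_four_thirds {α β δ : ℝ} (hα : 0 ≤ α) (hδ : 0 ≤ δ)
    (hrow : α ^ 2 + β ^ 2 ≤ 1) (hcol : β ^ 2 + δ ^ 2 ≤ 1) (p q : ℝ) :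
    (α * p + β * q) ^ 2 + (δ * q) ^ 2 ≤ 4 / 3 * (p ^ 2 + q ^ 2) := by
  have hdet : α ^ 2 * β ^ 2 ≤ (4 / 3 - α ^ 2) * (4 / 3 - β ^ 2 - δ ^ 2) := by
    rcases le_total α δ with h | h
    · nlinarith [sq_nonneg (3 * α * δ - 2), mul_le_mul_of_nonneg_left h hα]
    · nlinarith [sq_nonneg (3 * α * δ - 2), mul_le_mul_of_nonneg_left h hδ]
  nlinarith [sq_nonneg ((4 / 3 - α ^ 2) * p - α * β * q),
    mul_nonneg (sub_nonneg.2 hdet) (sq_nonneg q)]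

namespace Matrix

variable {𝕜 m n : Type*} [RCLike 𝕜] [Fintype m] [Fintype n] [DecidableEq n]

lemma l2_opNorm_le_of_mulVec {A : Matrix m n 𝕜} {c : ℝ} (hc : 0 ≤ c)
    (h : ∀ x : EuclideanSpace 𝕜 n, ‖(EuclideanSpace.equiv m 𝕜).symm (A *ᵥ x)‖ ≤ c * ‖x‖) :
    ‖A‖ ≤ c := by
  rw [l2_opNorm_def]
  exact ContinuousLinearMap.opNorm_le_bound _ hc h

lemma sum_col_norm_sq_le_l2_opNorm_sq (A : Matrix m n 𝕜) (j : n) :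
    ∑ i, ‖A i j‖ ^ 2 ≤ ‖A‖ ^ 2 := by
  have h := A.l2_opNorm_mulVec (EuclideanSpace.single j 1)
  rw [PiLp.norm_single, norm_one, mul_one] at h
  have h2 := pow_le_pow_left₀ (norm_nonneg _) h 2
  rw [EuclideanSpace.norm_sq_eq] at h2
  simpa [mulVec_single_one] using h2

lemma sum_row_norm_sq_le_l2_opNorm_sq [DecidableEq m] (A : Matrix m n 𝕜) (i : m) :
    ∑ j, ‖A i j‖ ^ 2 ≤ ‖A‖ ^ 2 := by
  simpa [l2_opNorm_conjTranspose] using Aᴴ.sum_col_norm_sq_le_l2_opNorm_sq i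

lemma norm_sq_equiv_symm_fin_two (x : Fin 2 → 𝕜) :
    ‖(EuclideanSpace.equiv (Fin 2) 𝕜).symm x‖ ^ 2 = ‖x 0‖ ^ 2 + ‖x 1‖ ^ 2 := by
  simp [EuclideanSpace.norm_sq_eq, Fin.sum_univ_two]

lemma l2_opNorm_upperTriangular_le {a b d : 𝕜} (hrow : ‖a‖ ^ 2 + ‖b‖ ^ 2 ≤ 1)
    (hcol : ‖b‖ ^ 2 + ‖d‖ ^ 2 ≤ 1) : ‖!![a, b; 0, d]‖ ≤ √(4 / 3) := by
  refine l2_opNorm_le_of_mulVec (sqrt_nonneg _) fun x => ?_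
  rw [← pow_le_pow_iff_left₀ (norm_nonneg _) (by positivity) two_ne_zero, mul_pow,
    sq_sqrt (by norm_num), mulVec_fin_two, norm_sq_equiv_symm_fin_two, EuclideanSpace.norm_sq_eq,
    Fin.sum_univ_two]
  simp only [of_apply, cons_val', cons_val_zero, cons_val_fin_one, cons_val_one, zero_mul,
    zero_add, norm_mul]
  have htri : ‖a * x 0 + b * x 1‖ ≤ ‖a‖ * ‖x 0‖ + ‖b‖ * ‖x 1‖ :=
    (norm_add_le _ _).trans_eq (by rw [norm_mul, norm_mul])
  have hquad := triangular_quadForm_le_four_thirds (norm_nonneg a) (norm_nonneg d) hrow hcol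
    ‖x 0‖ ‖x 1‖
  nlinarith [pow_le_pow_left₀ (norm_nonneg _) htri 2]

lemma hadamard_upperTriangular_ones (X : Matrix (Fin 2) (Fin 2) 𝕜) :
    (!![1, 1; 0, 1] : Matrix (Fin 2) (Fin 2) 𝕜) ⊙ X = !![X 0 0, X 0 1; 0, X 1 1] := by
  ext i j
  fin_cases i <;> fin_cases j <;> simp

lemma l2_opNorm_hadamard_upperTriangular_ones_le {X : Matrix (Fin 2) (Fin 2) 𝕜} (hX : ‖X‖ ≤ 1) :
    ‖(!![1, 1; 0, 1] : Matrix (Fin 2) (Fin 2) 𝕜) ⊙ X‖ ≤ √(4 / 3) := by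
  have hX2 : ‖X‖ ^ 2 ≤ 1 := pow_le_one₀ (norm_nonneg X) hX
  have hrow := (X.sum_row_norm_sq_le_l2_opNorm_sq 0).trans hX2
  have hcol := (X.sum_col_norm_sq_le_l2_opNorm_sq 1).trans hX2
  rw [Fin.sum_univ_two] at hrow hcol
  rw [hadamard_upperTriangular_ones]
  exact l2_opNorm_upperTriangular_le hrow (by linarith)

noncomputable def rotationMatrix (θ : ℝ) : Matrix (Fin 2) (Fin 2) ℂ :=
  !![(cos θ : ℂ), (sin θ : ℂ); -(sin θ : ℂ), (cos θ : ℂ)]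

lemma rotationMatrix_mem_unitaryGroup (θ : ℝ) : rotationMatrix θ ∈ unitaryGroup (Fin 2) ℂ := by
  have h : (cos θ : ℂ) ^ 2 + (sin θ : ℂ) ^ 2 = 1 := by exact_mod_cast cos_sq_add_sin_sq θ
  rw [mem_unitaryGroup_iff, star_eq_conjTranspose]
  ext i j
  fin_cases i <;> fin_cases j <;>
    simp [rotationMatrix, mul_apply, Fin.sum_univ_two, -Complex.ofReal_cos, -Complex.ofReal_sin]
  all_goals first | linear_combination h | ring

lemma l2_opNorm_rotationMatrix (θ : ℝ) : ‖rotationMatrix θ‖ = 1 :=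
  CStarRing.norm_of_mem_unitary (rotationMatrix_mem_unitaryGroup θ)

lemma hadamard_upperTriangular_ones_rotationMatrix (θ : ℝ) :
    (!![1, 1; 0, 1] : Matrix (Fin 2) (Fin 2) ℂ) ⊙ rotationMatrix θ =
      !![(cos θ : ℂ), (sin θ : ℂ); 0, (cos θ : ℂ)] := by
  rw [hadamard_upperTriangular_ones]
  rfl

/-- The test vector `(c, 2s)` is proportional to `(1, √2)`, the top right singular vector. -/
lemma sqrt_four_thirds_le_l2_opNorm {c s : ℝ} (hcs : c ^ 2 + s ^ 2 = 1) (hs : s ^ 2 = 1 / 3) :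
    √(4 / 3) ≤ ‖!![(c : ℂ), (s : ℂ); 0, (c : ℂ)]‖ := by
  have hc : c ^ 2 = 2 / 3 := by linarith
  set M : Matrix (Fin 2) (Fin 2) ℂ := !![(c : ℂ), (s : ℂ); 0, (c : ℂ)]
  set x : Fin 2 → ℂ := ![(c : ℂ), (2 * s : ℝ)]
  have hx : ‖(EuclideanSpace.equiv (Fin 2) ℂ).symm x‖ ^ 2 = 2 := by
    rw [norm_sq_equiv_symm_fin_two]
    simp [x, Complex.norm_real, mul_pow, hc, hs]
    norm_num
  have hMx : ‖(EuclideanSpace.equiv (Fin 2) ℂ).symm (M *ᵥ x)‖ ^ 2 = 8 / 3 := by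
    rw [mulVec_fin_two, norm_sq_equiv_symm_fin_two]
    simp [x, M, ← Complex.ofReal_mul, ← Complex.ofReal_add, Complex.norm_real, mul_pow, sq_abs]
    linear_combination (6 * s ^ 2 + c ^ 2 + 4 / 3) * hc + (2 * (c ^ 2 + 2 * s ^ 2) + 16 / 3) * hs
  have h : ‖(EuclideanSpace.equiv (Fin 2) ℂ).symm (M *ᵥ x)‖ ≤
      ‖M‖ * ‖(EuclideanSpace.equiv (Fin 2) ℂ).symm x‖ := by
    simpa using l2_opNorm_mulVec M ((EuclideanSpace.equiv (Fin 2) ℂ).symm x)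
  have h2 := pow_le_pow_left₀ (norm_nonneg _) h 2
  rw [mul_pow, hMx, hx] at h2
  rw [sqrt_le_left (norm_nonneg _)]
  linarith

end Matrix

/-- The norm of the Schur multiplier `S_A` on `M₂(ℂ)`, where `A = !![1,1;0,1]`,
equals the supremum over `θ ∈ ℝ` of the operator norm of `[[cos θ, sin θ],[0, cos θ]]`. -/
theorem schur_multiplier_norm_eq_sup_rotations :
    sSup {c : ℝ | ∃ X : Matrix (Fin 2) (Fin 2) ℂ, ‖X‖ ≤ 1 ∧
        c = ‖Matrix.hadamard (!![1, 1; 0, 1] : Matrix (Fin 2) (Fin 2) ℂ) X‖} =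
      ⨆ θ : ℝ, ‖(!![(Real.cos θ : ℂ), (Real.sin θ : ℂ); 0, (Real.cos θ : ℂ)] :
          Matrix (Fin 2) (Fin 2) ℂ)‖ := by
  set S := {c : ℝ | ∃ X : Matrix (Fin 2) (Fin 2) ℂ, ‖X‖ ≤ 1 ∧
    c = ‖Matrix.hadamard (!![1, 1; 0, 1] : Matrix (Fin 2) (Fin 2) ℂ) X‖}
  have hS : ∀ c ∈ S, c ≤ √(4 / 3) := by
    rintro c ⟨X, hX, rfl⟩
    exact l2_opNorm_hadamard_upperTriangular_ones_le hX
  have hmem (θ : ℝ) :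
      ‖(!![(cos θ : ℂ), (sin θ : ℂ); 0, (cos θ : ℂ)] : Matrix (Fin 2) (Fin 2) ℂ)‖ ∈ S :=
    ⟨rotationMatrix θ, (l2_opNorm_rotationMatrix θ).le,
      by rw [hadamard_upperTriangular_ones_rotationMatrix]⟩
  obtain ⟨θ₀, hθ₀⟩ : ∃ θ, sin θ ^ 2 = 1 / 3 :=
    ⟨arcsin √(1 / 3), by
      rw [sin_arcsin (by linarith [sqrt_nonneg (1 / 3)]) (sqrt_le_one.2 (by norm_num)),
        sq_sqrt (by norm_num)]⟩
  refine le_antisymm ((csSup_le ⟨_, hmem 0⟩ hS).trans ?_)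
    (ciSup_le fun θ => le_csSup ⟨_, hS⟩ (hmem θ))
  exact le_ciSup_of_le ⟨_, Set.forall_mem_range.2 fun θ => hS _ (hmem θ)⟩ θ₀
    (sqrt_four_thirds_le_l2_opNorm (cos_sq_add_sin_sq θ₀) hθ₀)
end

section
/- For every θ ∈ ℝ, the operator norm of the 2×2 matrix [[cos θ, sin θ],[0, cos θ]] is at most 2/√3, and the supremum over θ of these norms equals 2/√3. -/
/-!
For `c² + s² = 1` the matrix `M = [[c, s], [0, c]]` satisfies
`(4/3)‖x‖² - ‖M x‖² = (x₁ - 3cs x₀)²/3 + 3((c² - 2/3) x₀)²` on real vectors, and the real and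
imaginary parts of a complex vector contribute separately, so `‖M‖ ≤ 2/√3`.
Equality holds when `c² = 2/3`, attained at the unit vector `(s, c)`.
-/

open Matrix
open scoped Matrix.Norms.L2Operator

lemma quadratic_form_le_four_thirds {c s : ℝ} (h : c ^ 2 + s ^ 2 = 1) (x y : ℝ) :
    (c * x + s * y) ^ 2 + (c * y) ^ 2 ≤ 4 / 3 * (x ^ 2 + y ^ 2) := by
  nlinarith [sq_nonneg (y - 3 * c * s * x), sq_nonneg ((c ^ 2 - 2 / 3) * x)]

lemma complex_quadratic_form_le_four_thirds {c s : ℝ} (h : c ^ 2 + s ^ 2 = 1) (a b : ℂ) :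
    ‖(c : ℂ) * a + s * b‖ ^ 2 + ‖(c : ℂ) * b‖ ^ 2 ≤ 4 / 3 * (‖a‖ ^ 2 + ‖b‖ ^ 2) := by
  simp only [Complex.sq_norm, Complex.normSq_apply, Complex.add_re, Complex.add_im,
    Complex.mul_re, Complex.mul_im, Complex.ofReal_re, Complex.ofReal_im]
  nlinarith [quadratic_form_le_four_thirds h a.re b.re, quadratic_form_le_four_thirds h a.im b.im]

lemma sq_norm_toEuclideanCLM_fin_two {𝕜 : Type*} [RCLike 𝕜] (a b c d : 𝕜)
    (x : EuclideanSpace 𝕜 (Fin 2)) :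
    ‖toEuclideanCLM (n := Fin 2) (𝕜 := 𝕜) !![a, b; c, d] x‖ ^ 2 =
      ‖a * x 0 + b * x 1‖ ^ 2 + ‖c * x 0 + d * x 1‖ ^ 2 := by
  simp [EuclideanSpace.norm_sq_eq, Fin.sum_univ_two, mulVec, dotProduct]

lemma two_div_sqrt_three_sq : (2 / Real.sqrt 3) ^ 2 = 4 / 3 := by
  rw [div_pow, Real.sq_sqrt] <;> norm_num

lemma norm_upperTriangular_le {c s : ℝ} (h : c ^ 2 + s ^ 2 = 1) :
    ‖(!![(c : ℂ), s; 0, c] : Matrix (Fin 2) (Fin 2) ℂ)‖ ≤ 2 / Real.sqrt 3 := by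
  rw [← l2_opNorm_toEuclideanCLM]
  refine ContinuousLinearMap.opNorm_le_bound _ (by positivity) fun x => ?_
  rw [← pow_le_pow_iff_left₀ (norm_nonneg _) (by positivity) two_ne_zero, mul_pow,
    two_div_sqrt_three_sq, sq_norm_toEuclideanCLM_fin_two, EuclideanSpace.norm_sq_eq,
    Fin.sum_univ_two]
  simpa using complex_quadratic_form_le_four_thirds h (x 0) (x 1)

lemma le_sq_norm_upperTriangular {c s : ℝ} (h : c ^ 2 + s ^ 2 = 1) :
    c ^ 2 * (4 - 3 * c ^ 2) ≤ ‖(!![(c : ℂ), s; 0, c] : Matrix (Fin 2) (Fin 2) ℂ)‖ ^ 2 := by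
  set v : EuclideanSpace ℂ (Fin 2) := WithLp.toLp 2 ![(s : ℂ), c]
  set T := toEuclideanCLM (n := Fin 2) (𝕜 := ℂ) !![(c : ℂ), s; 0, c]
  have hv : ‖v‖ ^ 2 = 1 := by
    simpa [EuclideanSpace.norm_sq_eq, v, Fin.sum_univ_two, add_comm] using h
  have hTv : ‖T v‖ ^ 2 = c ^ 2 * (4 - 3 * c ^ 2) := by
    rw [sq_norm_toEuclideanCLM_fin_two]
    simp only [v, Matrix.cons_val_zero, Matrix.cons_val_one, zero_mul, zero_add]
    rw [← Complex.ofReal_mul, ← Complex.ofReal_mul, ← Complex.ofReal_mul, ← Complex.ofReal_add,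
      Complex.norm_real, Complex.norm_real, Real.norm_eq_abs, Real.norm_eq_abs, sq_abs, sq_abs]
    linear_combination (4 * c ^ 2) * h
  calc c ^ 2 * (4 - 3 * c ^ 2) = ‖T v‖ ^ 2 := hTv.symm
    _ ≤ (‖T‖ * ‖v‖) ^ 2 := by gcongr; exact T.le_opNorm v
    _ = ‖T‖ ^ 2 := by rw [mul_pow, hv, mul_one]

lemma exists_cos_sq_eq_two_thirds : ∃ θ : ℝ, Real.cos θ ^ 2 = 2 / 3 := by
  refine ⟨Real.arccos (Real.sqrt (2 / 3)), ?_⟩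
  rw [Real.cos_arccos (by linarith [Real.sqrt_nonneg (2 / 3)])
    (Real.sqrt_le_one.mpr (by norm_num)), Real.sq_sqrt (by norm_num)]

/-- For every `θ`, the operator norm of `[[cos θ, sin θ],[0, cos θ]]` is at most `2/√3`,
and the supremum over `θ` of these norms equals `2/√3`. -/
theorem rotation_matrix_norm_bound :
    (∀ θ : ℝ, ‖(!![(Real.cos θ : ℂ), (Real.sin θ : ℂ); 0, (Real.cos θ : ℂ)] :
        Matrix (Fin 2) (Fin 2) ℂ)‖ ≤ 2 / Real.sqrt 3) ∧
    (⨆ θ : ℝ, ‖(!![(Real.cos θ : ℂ), (Real.sin θ : ℂ); 0, (Real.cos θ : ℂ)] :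
        Matrix (Fin 2) (Fin 2) ℂ)‖) = 2 / Real.sqrt 3 := by
  have upper θ := norm_upperTriangular_le (Real.cos_sq_add_sin_sq θ)
  refine ⟨upper, le_antisymm (ciSup_le upper) ?_⟩
  obtain ⟨θ₀, hθ₀⟩ := exists_cos_sq_eq_two_thirds
  refine le_ciSup_of_le ⟨_, Set.forall_mem_range.mpr upper⟩ θ₀ ?_
  rw [← pow_le_pow_iff_left₀ (by positivity) (norm_nonneg _) two_ne_zero, two_div_sqrt_three_sq]
  refine le_of_eq_of_le ?_ (le_sq_norm_upperTriangular (Real.cos_sq_add_sin_sq θ₀))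
  rw [hθ₀]
  norm_num
end
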